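/- arXiv:2105.08980 — 8 statements merged into one kernel-verified Lean document; each statement's English description precedes it below -/
import Mathlib

section
/- Let M, g, m ≥ 1 be integers. Suppose for each ℓ ∈ [g] we have sequences x_ℓ^1,...,x_ℓ^{m+1} and y_ℓ^1,...,y_ℓ^{m+1} of natural numbers satisfying: (1) y_ℓ^{j+1} + x_ℓ^j = M for all ℓ ∈ [g], j ∈ [m]; (2) y_ℓ^j + x_ℓ^j ≤ M for all ℓ ∈ [g], j ∈ [m+1]; (3) Σ_{ℓ=1}^g x_ℓ^{m+1} = gM/2 = Σ_{ℓ=1}^g y_ℓ^1. Then for every ℓ ∈ [g], the sequence x_ℓ^1, ..., x_ℓ^{m+1} is constant, and similarly each sequence y_ℓ^1, ..., y_ℓ^{m+1} is constant. -/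
/-!
Along a row, (1) and (2) give `x^{j+1} ≤ M - y^{j+1} = x^j`, so `x` is antitone. Summing over the
rows, `gM = Σ y^1 + Σ x^{m+1} ≤ Σ (y^1 + x^1) ≤ gM`, so in every row `x^{m+1} = x^1` and
`y^1 + x^1 = M`. Hence `x` is constant on each row, and then so is `y^{j+1} = M - x^j`.
-/

open Finset

section Row

variable {M m : ℕ} {x y : ℕ → ℕ}

theorem antitoneOn_of_add_eq_of_add_le
    (h1 : ∀ j ∈ Icc 1 m, y (j + 1) + x j = M) (h2 : ∀ j ∈ Icc 1 (m + 1), y j + x j ≤ M) :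
    AntitoneOn x (Set.Icc 1 (m + 1)) := by
  refine antitoneOn_of_le_sub_one Set.ordConnected_Icc fun j _ hj hj' => ?_
  simp only [Set.mem_Icc] at hj hj'
  obtain ⟨i, rfl⟩ : ∃ i, j = i + 1 := ⟨j - 1, by omega⟩
  have := h1 i (mem_Icc.2 ⟨hj'.1, by omega⟩)
  have := h2 (i + 1) (mem_Icc.2 hj)
  simp only [Nat.add_sub_cancel]
  omega

theorem eq_and_eq_sub_of_add_eq_of_add_le
    (h1 : ∀ j ∈ Icc 1 m, y (j + 1) + x j = M) (h2 : ∀ j ∈ Icc 1 (m + 1), y j + x j ≤ M)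
    (hx : x (m + 1) = x 1) (hyx : y 1 + x 1 = M) :
    ∀ j ∈ Icc 1 (m + 1), x j = x 1 ∧ y j = M - x 1 := by
  have hanti := antitoneOn_of_add_eq_of_add_le h1 h2
  have hx_const : ∀ j ∈ Icc 1 (m + 1), x j = x 1 := fun j hj => by
    rw [mem_Icc] at hj
    have := hanti (by simp) (by simpa using hj) hj.1
    have := hanti (by simpa using hj) (by simp) hj.2
    omega
  intro j hj
  refine ⟨hx_const j hj, ?_⟩
  obtain ⟨hj1, hjm⟩ := mem_Icc.1 hj
  rcases hj1.eq_or_lt with rfl | hj1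
  · omega
  · obtain ⟨i, rfl⟩ : ∃ i, j = i + 1 := ⟨j - 1, by omega⟩
    have := h1 i (mem_Icc.2 ⟨by omega, by omega⟩)
    have := hx_const i (mem_Icc.2 ⟨by omega, by omega⟩)
    omega

end Row

theorem stmt_1_general (M g m : ℕ)
    (hEven : Even (g * M)) (x y : ℕ → ℕ → ℕ)
    (h1 : ∀ ℓ ∈ Finset.Icc 1 g, ∀ j ∈ Finset.Icc 1 m, y ℓ (j + 1) + x ℓ j = M)
    (h2 : ∀ ℓ ∈ Finset.Icc 1 g, ∀ j ∈ Finset.Icc 1 (m + 1), y ℓ j + x ℓ j ≤ M)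
    (h3x : ∑ ℓ ∈ Finset.Icc 1 g, x ℓ (m + 1) = g * M / 2)
    (h3y : ∑ ℓ ∈ Finset.Icc 1 g, y ℓ 1 = g * M / 2) :
    ∀ ℓ ∈ Finset.Icc 1 g, ∀ j ∈ Finset.Icc 1 (m + 1), ∀ j' ∈ Finset.Icc 1 (m + 1),
      x ℓ j = x ℓ j' ∧ y ℓ j = y ℓ j' := by
  have hx : ∀ ℓ ∈ Icc 1 g, x ℓ (m + 1) ≤ x ℓ 1 := fun ℓ hℓ =>
    antitoneOn_of_add_eq_of_add_le (h1 ℓ hℓ) (h2 ℓ hℓ) (by simp) (by simp) (by omega)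
  have hyx : ∀ ℓ ∈ Icc 1 g, y ℓ 1 + x ℓ 1 ≤ M := fun ℓ hℓ => h2 ℓ hℓ 1 (by simp)
  have hsum_x := sum_le_sum hx
  have hsum_yx : ∑ ℓ ∈ Icc 1 g, (y ℓ 1 + x ℓ 1) = ∑ ℓ ∈ Icc 1 g, y ℓ 1 + ∑ ℓ ∈ Icc 1 g, x ℓ 1 :=
    sum_add_distrib
  have hsum_M : ∑ ℓ ∈ Icc 1 g, M = g * M := by simp
  have hle := sum_le_sum hyx
  obtain ⟨k, hk⟩ := hEven
  have hx_eq := (sum_eq_sum_iff_of_le hx).1 (by omega)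
  have hyx_eq := (sum_eq_sum_iff_of_le hyx).1 (by omega)
  intro ℓ hℓ j hj j' hj'
  have row := eq_and_eq_sub_of_add_eq_of_add_le (h1 ℓ hℓ) (h2 ℓ hℓ) (hx_eq ℓ hℓ) (hyx_eq ℓ hℓ)
  obtain ⟨hxj, hyj⟩ := row j hj
  obtain ⟨hxj', hyj'⟩ := row j' hj'
  exact ⟨hxj.trans hxj'.symm, hyj.trans hyj'.symm⟩

theorem stmt_1 (M g m : ℕ) (hM : 1 ≤ M) (hg : 1 ≤ g) (hm : 1 ≤ m)
    (hEven : Even (g * M)) (x y : ℕ → ℕ → ℕ)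
    (h1 : ∀ ℓ ∈ Finset.Icc 1 g, ∀ j ∈ Finset.Icc 1 m, y ℓ (j + 1) + x ℓ j = M)
    (h2 : ∀ ℓ ∈ Finset.Icc 1 g, ∀ j ∈ Finset.Icc 1 (m + 1), y ℓ j + x ℓ j ≤ M)
    (h3x : ∑ ℓ ∈ Finset.Icc 1 g, x ℓ (m + 1) = g * M / 2)
    (h3y : ∑ ℓ ∈ Finset.Icc 1 g, y ℓ 1 = g * M / 2) :
    ∀ ℓ ∈ Finset.Icc 1 g, ∀ j ∈ Finset.Icc 1 (m + 1), ∀ j' ∈ Finset.Icc 1 (m + 1),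
      x ℓ j = x ℓ j' ∧ y ℓ j = y ℓ j' :=
  stmt_1_general M g m hEven x y h1 h2 h3x h3y
end

section
/- Define sequences P₀, P₁ : ℕ → ℕ by P₀(0) = P₁(0) = 1, P₀(d) = P₀(d−1) + P₁(d−1), and P₁(d) = P₀(d−1). Then the sequence of ratios (P₀(d) + P₁(d)) / P₀(d) (as rational numbers) is injective in d: for d ≠ d', (P₀(d)+P₁(d))/P₀(d) ≠ (P₀(d')+P₁(d'))/P₀(d'). -/
theorem stmt_3 (P0 P1 : ℕ → ℕ) (h00 : P0 0 = 1) (h10 : P1 0 = 1)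
    (h0 : ∀ d, P0 (d + 1) = P0 d + P1 d) (h1 : ∀ d, P1 (d + 1) = P0 d) :
    Function.Injective (fun d => ((P0 d : ℚ) + (P1 d : ℚ)) / (P0 d : ℚ)) := by
  have hP0pos : ∀ d, 0 < P0 d := by
    intro d
    induction d with
    | zero => simp [h00]
    | succ n ih => rw [h0]; omega
  have hP1pos : ∀ d, 0 < P1 d := by
    intro d
    cases d with
    | zero => simp [h10]
    | succ n => rw [h1]; exact hP0pos n
  have hcop : ∀ d, Nat.Coprime (P0 d + P1 d) (P0 d) := by
    intro d
    induction d with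
    | zero => simp [h00, h10]
    | succ n ih =>
      rw [h0, h1]
      have : P0 n + P1 n + P0 n = P0 n + (P0 n + P1 n) := by ring
      rw [this]
      exact Nat.coprime_add_self_left.mpr ih.symm
  have hmono : StrictMono P0 := by
    apply strictMono_nat_of_lt_succ
    intro n
    rw [h0]
    have := hP1pos n
    omega
  intro d d' h
  simp only at h
  have hd : (P0 d : ℚ) ≠ 0 := by exact_mod_cast (hP0pos d).ne'
  have hd' : (P0 d' : ℚ) ≠ 0 := by exact_mod_cast (hP0pos d').ne'
  rw [div_eq_div_iff hd hd'] at h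
  have hn : (P0 d + P1 d) * P0 d' = (P0 d' + P1 d') * P0 d := by exact_mod_cast h
  have h1d : P0 d ∣ P0 d' := by
    have hdvd : P0 d ∣ (P0 d + P1 d) * P0 d' := ⟨P0 d' + P1 d', by linarith [hn]⟩
    exact ((hcop d).symm.dvd_of_dvd_mul_left hdvd)
  have h2d : P0 d' ∣ P0 d := by
    have hdvd : P0 d' ∣ (P0 d' + P1 d') * P0 d := ⟨P0 d + P1 d, by linarith [hn]⟩
    exact ((hcop d').symm.dvd_of_dvd_mul_left hdvd)
  exact hmono.injective (Nat.dvd_antisymm h1d h2d)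
end

section
/- Let B ⊆ ℕ be finite with min B ≥ 1, and let G be the graph on min B + 1 vertices obtained from the complete graph K_{min B + 1} by deleting one edge {u,v} and adding one dangling edge at u and one at v. Consider edge subsets S (possibly including dangling edges) with deg_S(w) ∈ B for every vertex w. Then: (a) there exists such an S containing both dangling edges; (b) every such S contains both dangling edges. -/
/-- Degree of `w` with respect to an edge set `S` on the clique vertices. -/
def cliqueDeg {n : ℕ} (S : Finset (Sym2 (Fin n))) (w : Fin n) : ℕ :=
  (S.filter (fun e => w ∈ e)).card

open Finset

lemma edge_filter_eq {n : ℕ} (P : Sym2 (Fin n) → Prop) [DecidablePred P] (w : Fin n) :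
    (univ.filter (fun e : Sym2 (Fin n) => w ∈ e ∧ ¬ e.IsDiag ∧ P e)) =
      ((univ.erase w).filter (fun x => P s(w, x))).image (fun x => s(w, x)) := by
  ext e
  simp only [mem_filter, mem_univ, true_and, mem_image, mem_erase]
  constructor
  · rintro ⟨hw, hd, hP⟩
    have hne : Sym2.Mem.other' hw ≠ w := by
      rw [← Sym2.other_eq_other']; exact Sym2.other_ne hd hw
    refine ⟨Sym2.Mem.other' hw, ⟨⟨hne, trivial⟩, ?_⟩, Sym2.other_spec' hw⟩
    rw [Sym2.other_spec' hw]; exact hP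
  · rintro ⟨x, ⟨⟨hx, -⟩, hP⟩, rfl⟩
    exact ⟨Sym2.mem_mk_left w x, by simp [Sym2.isDiag_iff_proj_eq, Ne.symm hx], hP⟩

lemma edge_count {n : ℕ} (P : Sym2 (Fin n) → Prop) [DecidablePred P] (w : Fin n) :
    (univ.filter (fun e : Sym2 (Fin n) => w ∈ e ∧ ¬ e.IsDiag ∧ P e)).card =
      ((univ.erase w).filter (fun x => P s(w, x))).card := by
  rw [edge_filter_eq]
  exact card_image_of_injOn (fun x _ y _ h => Sym2.congr_right.mp h)

lemma deg_full {n : ℕ} (u v : Fin n) (huv : u ≠ v) (w : Fin n) :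
    cliqueDeg (univ.filter (fun e : Sym2 (Fin n) => ¬ e.IsDiag ∧ e ≠ s(u, v))) w
      = if w = u ∨ w = v then n - 2 else n - 1 := by
  have h1 : cliqueDeg (univ.filter (fun e : Sym2 (Fin n) => ¬ e.IsDiag ∧ e ≠ s(u, v))) w
      = (univ.filter (fun e : Sym2 (Fin n) => w ∈ e ∧ ¬ e.IsDiag ∧ e ≠ s(u, v))).card := by
    unfold cliqueDeg
    congr 1
    ext e
    simp only [mem_filter, mem_univ, true_and]
    tauto
  rw [h1, edge_count (fun e => e ≠ s(u, v)) w]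
  rcases eq_or_ne w u with rfl | hwu
  · simp only [true_or, if_true]
    have h2 : ((univ.erase w).filter (fun x => s(w, x) ≠ s(w, v))) = (univ.erase w).erase v := by
      ext x
      simp only [mem_filter, mem_erase, mem_univ, and_true, true_and, ne_eq, Sym2.eq_iff]
      tauto
    rw [h2, card_erase_of_mem (by simp [Ne.symm huv]), card_erase_of_mem (mem_univ w),
      card_univ, Fintype.card_fin]
    omega
  · rcases eq_or_ne w v with rfl | hwv
    · simp only [or_true, if_true]
      have h2 : ((univ.erase w).filter (fun x => s(w, x) ≠ s(u, w))) = (univ.erase w).erase u := by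
        ext x
        simp only [mem_filter, mem_erase, mem_univ, and_true, true_and, ne_eq, Sym2.eq_iff]
        tauto
      rw [h2, card_erase_of_mem (by simp [huv]), card_erase_of_mem (mem_univ w),
        card_univ, Fintype.card_fin]
      omega
    · simp only [hwu, hwv, or_self, if_false]
      have h2 : ((univ.erase w).filter (fun x => s(w, x) ≠ s(u, v))) = univ.erase w := by
        apply filter_true_of_mem
        intro x _
        intro h
        rcases Sym2.eq_iff.mp h with ⟨h', _⟩ | ⟨h', _⟩
        · exact hwu h'
        · exact hwv h'
      rw [h2, card_erase_of_mem (mem_univ w), card_univ, Fintype.card_fin]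

lemma deg_bound {n : ℕ} (S : Finset (Sym2 (Fin n))) (u v : Fin n) (huv : u ≠ v)
    (hS : ∀ e ∈ S, ¬ e.IsDiag ∧ e ≠ s(u, v)) : cliqueDeg S u ≤ n - 2 := by
  have hsub : S.filter (fun e => u ∈ e) ⊆
      univ.filter (fun e : Sym2 (Fin n) => u ∈ e ∧ ¬ e.IsDiag ∧ e ≠ s(u, v)) := by
    intro e he
    rw [mem_filter] at he ⊢
    exact ⟨mem_univ _, he.2, hS e he.1⟩
  calc cliqueDeg S u ≤ (univ.filter
        (fun e : Sym2 (Fin n) => u ∈ e ∧ ¬ e.IsDiag ∧ e ≠ s(u, v))).card :=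
      card_le_card hsub
    _ = cliqueDeg (univ.filter (fun e : Sym2 (Fin n) => ¬ e.IsDiag ∧ e ≠ s(u, v))) u := by
      unfold cliqueDeg
      congr 1
      ext e
      simp only [mem_filter, mem_univ, true_and]
      tauto
    _ = n - 2 := by rw [deg_full u v huv u]; simp

theorem stmt_6 (B : Finset ℕ) (hne : B.Nonempty) (hmin : 1 ≤ B.min' hne) :
    -- (a) there is a solution containing both dangling edges
    (∃ S : Finset (Sym2 (Fin (B.min' hne + 1))),
      (∀ e ∈ S, ¬ e.IsDiag ∧ e ≠ s((0 : Fin (B.min' hne + 1)), 1)) ∧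
      (∀ w : Fin (B.min' hne + 1),
        cliqueDeg S w + (if w = 0 then 1 else 0) + (if w = 1 then 1 else 0) ∈ B)) ∧
    -- (b) every solution contains both dangling edges
    (∀ (S : Finset (Sym2 (Fin (B.min' hne + 1)))) (du dv : Bool),
      (∀ e ∈ S, ¬ e.IsDiag ∧ e ≠ s((0 : Fin (B.min' hne + 1)), 1)) →
      (∀ w : Fin (B.min' hne + 1),
        cliqueDeg S w + (if w = 0 ∧ du = true then 1 else 0)
          + (if w = 1 ∧ dv = true then 1 else 0) ∈ B) →
      du = true ∧ dv = true) := by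
  set m := B.min' hne with hm
  have hmB : m ∈ B := B.min'_mem hne
  have h01 : (0 : Fin (m + 1)) ≠ 1 := by
    intro h
    have h1 : ((1 : Fin (m + 1)) : ℕ) = 1 := by
      rw [Fin.val_one']
      exact Nat.mod_eq_of_lt (by omega)
    have := congrArg Fin.val h
    rw [Fin.val_zero, h1] at this
    exact one_ne_zero this.symm
  constructor
  · refine ⟨univ.filter (fun e : Sym2 (Fin (m + 1)) => ¬ e.IsDiag ∧ e ≠ s(0, 1)),
      fun e he => (mem_filter.mp he).2, fun w => ?_⟩
    rw [deg_full 0 1 h01 w]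
    rcases eq_or_ne w 0 with rfl | hw0
    · simp only [eq_self_iff_true, true_or, if_true, if_neg h01]
      have : (m + 1 - 2) + 1 + 0 = m := by omega
      rw [this]; exact hmB
    · rcases eq_or_ne w 1 with rfl | hw1
      · simp only [eq_self_iff_true, or_true, if_true, if_neg hw0]
        have : (m + 1 - 2) + 0 + 1 = m := by omega
        rw [this]; exact hmB
      · simp only [hw0, hw1, or_self, if_false]
        have : (m + 1 - 1) + 0 + 0 = m := by omega
        rw [this]; exact hmB
  · intro S du dv hS hdeg
    have hb0 := hdeg 0
    have hb1 := hdeg 1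
    simp only [eq_self_iff_true, true_and, if_neg (fun h : (0 : Fin (m+1)) = 1 ∧ dv = true =>
      h01 h.1), add_zero] at hb0
    simp only [eq_self_iff_true, true_and, if_neg (fun h : (1 : Fin (m+1)) = 0 ∧ du = true =>
      h01 h.1.symm)] at hb1
    have hd0 : cliqueDeg S 0 ≤ m + 1 - 2 := deg_bound S 0 1 h01 hS
    have hS' : ∀ e ∈ S, ¬ e.IsDiag ∧ e ≠ s((1 : Fin (m + 1)), 0) := by
      intro e he
      refine ⟨(hS e he).1, ?_⟩
      rw [Sym2.eq_swap]
      exact (hS e he).2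
    have hd1 : cliqueDeg S 1 ≤ m + 1 - 2 := deg_bound S 1 0 h01.symm hS'
    have hle0 := B.min'_le _ hb0
    have hle1 := B.min'_le _ hb1
    rw [← hm] at hle0 hle1
    constructor
    · cases du with
      | true => rfl
      | false => simp only [Bool.false_eq_true, and_false, if_false, add_zero] at hle0; omega
    · cases dv with
      | true => rfl
      | false => simp only [Bool.false_eq_true, and_false, if_false, add_zero] at hle1; omega
end

section
/- Fix a positive integer x and a finite set B ⊆ ℕ. Define F₀ = Σ_{i : 2i ∈ B} C(x,i), F₁ = Σ_{i : 2i+1 ∈ B} C(x,i), F₂ = Σ_{i : 2i+2 ∈ B} C(x,i), where C(x,i) is the binomial coefficient. Viewing F₀F₂ − F₁² as a polynomial in x of degree at most max B, if B contains 0 and some odd number, then there exists a positive integer x ≤ max B + 1 such that F₀F₂ − F₁² ≠ 0 and F₀ ≥ 1 and F₁ ≥ 1. -/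
/-!
Write `F_r(x) = ∑_{2i + r ∈ B} C(x, i)` and `t = min {i | 2i + 1 ∈ B}`.

If `t ≤ 1`, then `F₁(x) ≥ 1` for all `x ≥ 1`, and `F₀F₂ − F₁²` is a polynomial in `x` of degree at
most `max B`. It is nonzero: with `a = max {i | 2i ∈ B}`, the product `F₀F₂` is zero or has odd
degree `a + (a - 1)`, while `F₁²` has even degree. Hence it does not vanish at one of
`1, …, max B + 1`.

If `t ≥ 2`, one of `x = t`, `x = t + 1` works. At `x = t` we have `F₁ = 1`, so failure forces
`F₀(t) = 1`, i.e. `2i ∉ B` for `1 ≤ i ≤ t`. Then at `x = t + 1` only `i ∈ {0, t + 1}` contribute to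
`F₀` and only `i ∈ {t, t + 1}` to `F₂`, so `F₀F₂ ≤ 2(t + 2) < (t + 1)² ≤ F₁²`.
-/

open Polynomial Finset

section BinomialPoly

variable {K : Type*} [Field K] [CharZero K]

variable (K) in
noncomputable def binomialPoly (i : ℕ) : K[X] :=
  C (i.factorial : K)⁻¹ * descPochhammer K i

theorem degree_binomialPoly (i : ℕ) : (binomialPoly K i).degree = i := by
  rw [binomialPoly, degree_C_mul (inv_ne_zero (Nat.cast_ne_zero.2 i.factorial_ne_zero)),
    degree_eq_natDegree (monic_descPochhammer K i).ne_zero, descPochhammer_natDegree]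

theorem eval_natCast_binomialPoly (i x : ℕ) : (binomialPoly K i).eval (x : K) = x.choose i := by
  rw [binomialPoly, eval_mul, eval_C, Nat.cast_choose_eq_descPochhammer_div, inv_mul_eq_div]

theorem eval_natCast_sum_binomialPoly (s : Finset ℕ) (x : ℕ) :
    (∑ i ∈ s, binomialPoly K i).eval (x : K) = ((∑ i ∈ s, x.choose i : ℕ) : K) := by
  simp only [eval_finsetSum, eval_natCast_binomialPoly, Nat.cast_sum]

theorem degree_sum_binomialPoly {s : Finset ℕ} (hs : s.Nonempty) :
    (∑ i ∈ s, binomialPoly K i).degree = s.max' hs := by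
  rw [degree_sum_eq_of_disjoint _ _ fun i _ j _ hij => by simpa [degree_binomialPoly] using hij]
  simp only [degree_binomialPoly, Nat.cast_withBot]
  rw [coe_max']
  rfl

theorem sum_binomialPoly_ne_zero {s : Finset ℕ} (hs : s.Nonempty) :
    ∑ i ∈ s, binomialPoly K i ≠ 0 :=
  ne_zero_of_degree_gt (n := ⊥) (by rw [degree_sum_binomialPoly hs]; exact WithBot.bot_lt_coe _)

theorem natDegree_sum_binomialPoly {s : Finset ℕ} (hs : s.Nonempty) :
    (∑ i ∈ s, binomialPoly K i).natDegree = s.max' hs :=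
  natDegree_eq_of_degree_eq_some (degree_sum_binomialPoly hs)

theorem natDegree_sum_binomialPoly_le {s : Finset ℕ} {d : ℕ} (h : ∀ i ∈ s, i ≤ d) :
    (∑ i ∈ s, binomialPoly K i).natDegree ≤ d :=
  natDegree_sum_le_of_forall_le s _ fun i hi =>
    (natDegree_eq_of_degree_eq_some (degree_binomialPoly i)).trans_le (h i hi)

theorem sum_binomialPoly_mul_ne_sq {S₀ S₁ S₂ : Finset ℕ} (hS₁ : S₁.Nonempty)
    (hshift : ∀ i, i ∈ S₂ ↔ i + 1 ∈ S₀) :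
    (∑ i ∈ S₀, binomialPoly K i) * (∑ i ∈ S₂, binomialPoly K i) ≠
      (∑ i ∈ S₁, binomialPoly K i) ^ 2 := by
  intro h
  have hS₂ : S₂.Nonempty := by
    rw [nonempty_iff_ne_empty]
    rintro rfl
    rw [sum_empty, mul_zero, eq_comm, pow_eq_zero_iff two_ne_zero] at h
    exact sum_binomialPoly_ne_zero hS₁ h
  have hS₀ : S₀.Nonempty := let ⟨i, hi⟩ := hS₂; ⟨i + 1, (hshift i).1 hi⟩
  have hdeg := congrArg natDegree h
  rw [natDegree_mul (sum_binomialPoly_ne_zero hS₀) (sum_binomialPoly_ne_zero hS₂), natDegree_pow,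
    natDegree_sum_binomialPoly hS₀, natDegree_sum_binomialPoly hS₁,
    natDegree_sum_binomialPoly hS₂] at hdeg
  -- `max S₂ = max S₀ - 1`, so the two sides have degrees of different parity
  have h₂₀ : S₂.max' hS₂ + 1 ≤ S₀.max' hS₀ := le_max' _ _ ((hshift _).1 (max'_mem _ _))
  have h₀₂ : S₀.max' hS₀ - 1 ≤ S₂.max' hS₂ :=
    le_max' _ _ ((hshift _).2 (by rw [Nat.sub_add_cancel (by omega)]; exact max'_mem _ _))
  omega

end BinomialPoly

theorem natDegree_mul_sub_sq_le {R : Type*} [CommRing R] {p q r : R[X]} {d : ℕ}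
    (hp : p.natDegree ≤ d) (hq : q.natDegree ≤ d) (hr : r.natDegree ≤ d) :
    (p * q - r ^ 2).natDegree ≤ 2 * d := by
  refine (natDegree_sub_le _ _).trans (max_le ?_ ?_)
  · exact natDegree_mul_le.trans (by omega)
  · exact natDegree_pow_le.trans (by omega)

theorem exists_eval_natCast_ne_zero {R : Type*} [CommRing R] [IsDomain R] [CharZero R]
    {p : R[X]} (hp : p ≠ 0) {m : ℕ} (hdeg : p.natDegree ≤ m) :
    ∃ x : ℕ, 1 ≤ x ∧ x ≤ m + 1 ∧ p.eval (x : R) ≠ 0 := by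
  by_contra! h
  refine hp (eq_zero_of_natDegree_lt_card_of_eval_eq_zero p
    (f := fun n : Fin (m + 1) => (((n : ℕ) + 1 : ℕ) : R)) (fun a b hab => ?_)
    (fun n => h _ (by omega) (by omega)) (by simpa using Nat.lt_succ_of_le hdeg))
  exact Fin.ext (by simpa using hab)

theorem sum_choose_le_sum_choose {s T : Finset ℕ} {x : ℕ} (h : ∀ i ∈ s, i ≤ x → i ∈ T) :
    ∑ i ∈ s, x.choose i ≤ ∑ i ∈ T, x.choose i :=
  calc ∑ i ∈ s, x.choose i = ∑ i ∈ s with i ≤ x, x.choose i :=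
        (sum_filter_of_ne fun _ _ hi => not_lt.1 fun hlt => hi (Nat.choose_eq_zero_of_lt hlt)).symm
    _ ≤ ∑ i ∈ T, x.choose i :=
        sum_le_sum_of_subset fun i hi => (mem_filter.1 hi).elim (h i)

theorem one_le_sum_choose {s : Finset ℕ} {i x : ℕ} (hi : i ∈ s) (hix : i ≤ x) :
    1 ≤ ∑ j ∈ s, x.choose j :=
  (Nat.choose_pos hix).trans_le (single_le_sum (fun _ _ => Nat.zero_le _) hi)

theorem exists_sum_choose_mul_ne_sq {S₀ S₁ S₂ : Finset ℕ} (h₀ : 0 ∈ S₀)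
    (hshift : ∀ i ∈ S₂, i + 1 ∈ S₀) {t : ℕ} (ht : t ∈ S₁) (hmin : ∀ i ∈ S₁, t ≤ i)
    (ht₂ : 2 ≤ t) :
    ∃ x, t ≤ x ∧ x ≤ t + 1 ∧
      (∑ i ∈ S₀, x.choose i) * (∑ i ∈ S₂, x.choose i) ≠ (∑ i ∈ S₁, x.choose i) ^ 2 := by
  by_contra! h
  have hF₁ : ∑ i ∈ S₁, t.choose i = 1 := by
    rw [sum_eq_single_of_mem t ht fun i hi hit =>
      Nat.choose_eq_zero_of_lt (lt_of_le_of_ne (hmin i hi) (Ne.symm hit)), Nat.choose_self]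
  have hF₀ : ∑ i ∈ S₀, t.choose i = 1 :=
    (mul_eq_one.1 ((h t le_rfl (by omega)).trans (by rw [hF₁, one_pow]))).1
  have hgap : ∀ i, 1 ≤ i → i ≤ t → i ∉ S₀ := by
    intro i hi hit hiS
    have := sum_le_sum_of_subset (f := t.choose) (insert_subset h₀ (singleton_subset_iff.2 hiS))
    rw [sum_pair (by omega), Nat.choose_zero_right] at this
    have := Nat.choose_pos hit
    omega
  have hF₀' : ∑ i ∈ S₀, (t + 1).choose i ≤ 2 := by
    refine (sum_choose_le_sum_choose (T := {0, t + 1}) fun i hi hit => ?_).trans ?_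
    · have := hgap i
      grind
    · rw [sum_pair (by omega), Nat.choose_zero_right, Nat.choose_self]
  have hF₂' : ∑ i ∈ S₂, (t + 1).choose i ≤ t + 2 := by
    refine (sum_choose_le_sum_choose (T := {t, t + 1}) fun i hi hit => ?_).trans ?_
    · have := hgap (i + 1)
      have := hshift i hi
      grind
    · rw [sum_pair (by omega), Nat.choose_succ_self_right, Nat.choose_self]
  have hF₁' : t + 1 ≤ ∑ i ∈ S₁, (t + 1).choose i :=
    (Nat.choose_succ_self_right t).symm.trans_le (single_le_sum (fun _ _ => Nat.zero_le _) ht)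
  have : (t + 1) ^ 2 ≤ 2 * (t + 2) :=
    calc (t + 1) ^ 2 ≤ (∑ i ∈ S₁, (t + 1).choose i) ^ 2 := Nat.pow_le_pow_left hF₁' 2
      _ = (∑ i ∈ S₀, (t + 1).choose i) * (∑ i ∈ S₂, (t + 1).choose i) :=
        (h (t + 1) (by omega) le_rfl).symm
      _ ≤ 2 * (t + 2) := Nat.mul_le_mul hF₀' hF₂'
  nlinarith

def halfIndex (B : Finset ℕ) (n r : ℕ) : Finset ℕ :=
  {i ∈ range n | 2 * i + r ∈ B}

theorem mem_halfIndex {B : Finset ℕ} {n r i : ℕ} (hB : ∀ b ∈ B, b < n) :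
    i ∈ halfIndex B n r ↔ 2 * i + r ∈ B := by
  simp only [halfIndex, mem_filter, mem_range, and_iff_right_iff_imp]
  intro hi
  have := hB _ hi
  omega

theorem stmt_9 (B : Finset ℕ) (hne : B.Nonempty) (h0 : 0 ∈ B) (hodd : ∃ b ∈ B, Odd b) :
    ∃ x : ℕ, 1 ≤ x ∧ x ≤ B.max' hne + 1 ∧
      (∑ i ∈ Finset.range (B.max' hne + 1), if 2 * i ∈ B then x.choose i else 0) *
        (∑ i ∈ Finset.range (B.max' hne + 1), if 2 * i + 2 ∈ B then x.choose i else 0) ≠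
        (∑ i ∈ Finset.range (B.max' hne + 1), if 2 * i + 1 ∈ B then x.choose i else 0) ^ 2 ∧
      1 ≤ (∑ i ∈ Finset.range (B.max' hne + 1), if 2 * i ∈ B then x.choose i else 0) ∧
      1 ≤ (∑ i ∈ Finset.range (B.max' hne + 1), if 2 * i + 1 ∈ B then x.choose i else 0) := by
  set m := B.max' hne
  have hB : ∀ b ∈ B, b < m + 1 := fun b hb => Nat.lt_succ_of_le (B.le_max' b hb)
  set S := halfIndex B (m + 1)
  have hS₀ : 0 ∈ S 0 := (mem_halfIndex hB).2 h0
  have hshift : ∀ i, i ∈ S 2 ↔ i + 1 ∈ S 0 := fun i => by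
    rw [mem_halfIndex hB, mem_halfIndex hB, mul_add_one, add_zero]
  have hS₁ : (S 1).Nonempty :=
    let ⟨_, hb, k, hk⟩ := hodd
    ⟨k, (mem_halfIndex hB).2 (hk ▸ hb)⟩
  set t := (S 1).min' hS₁
  have htm : 2 * t + 1 ≤ m := B.le_max' _ ((mem_halfIndex hB).1 (min'_mem _ hS₁))
  suffices ∃ x, t ≤ x ∧ 1 ≤ x ∧ x ≤ m + 1 ∧
      (∑ i ∈ S 0, x.choose i) * (∑ i ∈ S 2, x.choose i) ≠ (∑ i ∈ S 1, x.choose i) ^ 2 by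
    obtain ⟨x, htx, h1x, hxm, hx⟩ := this
    -- `S r` unfolds to the filter of the goal's sum; for `r = 0`, `2 * i + 0` reduces to `2 * i`
    simp only [← sum_filter]
    exact ⟨x, h1x, hxm, hx, one_le_sum_choose hS₀ x.zero_le,
      one_le_sum_choose (min'_mem _ hS₁) htx⟩
  rcases lt_or_ge t 2 with ht | ht
  · have hdeg : ∀ r, (∑ i ∈ S r, binomialPoly ℚ i).natDegree ≤ m / 2 := fun r =>
      natDegree_sum_binomialPoly_le fun i hi => by have := hB _ ((mem_halfIndex hB).1 hi); omega
    obtain ⟨x, h1x, hxm, hx⟩ := exists_eval_natCast_ne_zero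
      (sub_ne_zero.2 (sum_binomialPoly_mul_ne_sq hS₁ hshift))
      ((natDegree_mul_sub_sq_le (hdeg 0) (hdeg 2) (hdeg 1)).trans (Nat.mul_div_le m 2))
    refine ⟨x, by omega, h1x, hxm, fun h => hx ?_⟩
    rw [eval_sub, eval_mul, eval_pow, eval_natCast_sum_binomialPoly, eval_natCast_sum_binomialPoly,
      eval_natCast_sum_binomialPoly, ← Nat.cast_mul, ← Nat.cast_pow, h, sub_self]
  · obtain ⟨x, htx, hxt, hx⟩ := exists_sum_choose_mul_ne_sq hS₀ (fun i => (hshift i).1)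
      (min'_mem _ hS₁) (fun i => min'_le _ i) ht
    exact ⟨x, htx, by omega, by omega, hx⟩
end

section
/- Define P₀, P₂ : ℕ → ℝ by the recurrences P₀(d) = F₀·P₀(d−1) + F₂·P₂(d−1) and P₂(d) = F₂·P₀(d−1) + F₄·P₂(d−1), with initial vector (P₀(0), P₂(0)) = (F₀, F₂), where F₀, F₂, F₄ are reals with F₀ > 0, F₂ > 0, F₀F₄ ≠ F₂², and (F₀, F₂)ᵀ is not an eigenvector of the matrix [[F₀,F₂],[F₂,F₄]]. If additionally P₀(d) ≠ 0 and P₂(d) ≠ 0 for all d, then the map d ↦ P₂(d)/P₀(d) is injective. -/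
/-!
If `MᵃU` and `MᵇU` (`a < b`) had the same coordinate ratio they would be parallel, and cancelling
the invertible `Mᵃ` makes `U` parallel to `MʳU`, `r = b - a`. By Cayley–Hamilton
`Mʳ = αᵣ + βᵣ M` with `(μ₁ - μ₂) βᵣ = μ₁ʳ - μ₂ʳ`, where `μ₁ ≠ μ₂` are the eigenvalues (real since
`M` is symmetric, distinct since `M` is not scalar). As `U` is not parallel to `MU`, `βᵣ = 0`, so
`μ₁ʳ = μ₂ʳ`, forcing `μ₁ = -μ₂`, i.e. `tr M = 0`; but `P₂(1) = F₂ · tr M ≠ 0`.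
-/

open Matrix Function

def wedge {R : Type*} [CommRing R] (v w : Fin 2 → R) : R := v 0 * w 1 - v 1 * w 0

section CommRing

variable {R : Type*} [CommRing R]

lemma wedge_sub_smul (v x y : Fin 2 → R) (a b : R) :
    wedge v (a • x - b • y) = a * wedge v x - b * wedge v y := by
  simp only [wedge, Pi.sub_apply, Pi.smul_apply, smul_eq_mul]
  ring

lemma wedge_mulVec_mulVec (M : Matrix (Fin 2) (Fin 2) R) (v w : Fin 2 → R) :
    wedge (M *ᵥ v) (M *ᵥ w) = M.det * wedge v w := by
  simp only [wedge, mulVec_fin_two, det_fin_two, cons_val_zero, cons_val_one]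
  ring

-- Cayley–Hamilton
lemma mulVec_mulVec_self (M : Matrix (Fin 2) (Fin 2) R) (v : Fin 2 → R) :
    M *ᵥ (M *ᵥ v) = M.trace • (M *ᵥ v) - M.det • v := by
  ext i
  fin_cases i <;>
    simp [mulVec_fin_two, trace_fin_two, det_fin_two] <;> ring

lemma mul_wedge_pow_mulVec {M : Matrix (Fin 2) (Fin 2) R} {μ₁ μ₂ : R}
    (hsum : μ₁ + μ₂ = M.trace) (hprod : μ₁ * μ₂ = M.det) (v : Fin 2 → R) (n : ℕ) :
    (μ₁ - μ₂) * wedge v (M ^ n *ᵥ v) = (μ₁ ^ n - μ₂ ^ n) * wedge v (M *ᵥ v) := by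
  induction n using Nat.twoStepInduction with
  | zero => simp [wedge, mul_comm]
  | one => simp
  | more n ih₀ ih₁ =>
    have hstep : M ^ (n + 2) *ᵥ v = M.trace • (M ^ (n + 1) *ᵥ v) - M.det • (M ^ n *ᵥ v) := by
      rw [pow_succ', pow_succ', ← mulVec_mulVec, ← mulVec_mulVec, mulVec_mulVec_self,
        mulVec_mulVec, ← pow_succ']
    rw [hstep, wedge_sub_smul, ← hsum, ← hprod]
    linear_combination (μ₁ + μ₂) * ih₁ - μ₁ * μ₂ * ih₀

end CommRing

section Field

variable {K : Type*} [Field K]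

lemma wedge_eq_zero_iff_div_eq_div {v w : Fin 2 → K} (hv : v 0 ≠ 0) (hw : w 0 ≠ 0) :
    wedge v w = 0 ↔ v 1 / v 0 = w 1 / w 0 := by
  rw [div_eq_div_iff hv hw, wedge, sub_eq_zero, mul_comm (v 0), eq_comm]

lemma exists_eq_smul_of_wedge_eq_zero {v w : Fin 2 → K} (hv : v 0 ≠ 0) (h : wedge v w = 0) :
    ∃ c : K, w = c • v := by
  refine ⟨w 0 / v 0, ?_⟩
  ext i
  fin_cases i
  · simp [hv]
  · simp only [wedge, sub_eq_zero] at h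
    simp only [Fin.mk_one, Pi.smul_apply, smul_eq_mul]
    field_simp
    linear_combination h

end Field

lemma Matrix.IsSymm.discr_fin_two {M : Matrix (Fin 2) (Fin 2) ℝ} (hM : M.IsSymm) :
    M.discr = (M 0 0 - M 1 1) ^ 2 + 4 * M 0 1 ^ 2 := by
  have h10 : M 1 0 = M 0 1 := hM.apply 0 1
  rw [Matrix.discr_fin_two, trace_fin_two, det_fin_two, h10]
  ring

lemma Matrix.IsSymm.discr_pos {M : Matrix (Fin 2) (Fin 2) ℝ} (hM : M.IsSymm) {v : Fin 2 → ℝ}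
    (hv : wedge v (M *ᵥ v) ≠ 0) : 0 < M.discr := by
  rw [hM.discr_fin_two]
  by_contra! hle
  have hdiag : M 0 0 = M 1 1 := by nlinarith [sq_nonneg (M 0 0 - M 1 1), sq_nonneg (M 0 1)]
  have hoff : M 0 1 = 0 := by nlinarith [sq_nonneg (M 0 0 - M 1 1), sq_nonneg (M 0 1)]
  have h10 : M 1 0 = 0 := (hM.apply 0 1).trans hoff
  apply hv
  simp only [wedge, mulVec_fin_two, cons_val_zero, cons_val_one, hdiag, hoff, h10]
  ring

lemma exists_add_eq_trace_mul_eq_det (M : Matrix (Fin 2) (Fin 2) ℝ) (h : 0 ≤ M.discr) :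
    ∃ μ₁ μ₂ : ℝ, μ₁ + μ₂ = M.trace ∧ μ₁ * μ₂ = M.det ∧ (μ₁ - μ₂) ^ 2 = M.discr := by
  have hsq := Real.sq_sqrt h
  refine ⟨(M.trace + √M.discr) / 2, (M.trace - √M.discr) / 2, by ring, ?_, ?_⟩
  · linear_combination (-1 / 4 : ℝ) * (hsq + M.discr_fin_two)
  · linear_combination hsq

theorem injective_div_pow_mulVec_of_isSymm {M : Matrix (Fin 2) (Fin 2) ℝ} (hM : M.IsSymm)
    (hdet : M.det ≠ 0) (htr : M.trace ≠ 0) {U : Fin 2 → ℝ} (hU : ¬ ∃ c : ℝ, M *ᵥ U = c • U)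
    (hU₀ : ∀ n, (M ^ n *ᵥ U) 0 ≠ 0) :
    Injective fun n => (M ^ n *ᵥ U) 1 / (M ^ n *ᵥ U) 0 := by
  have hUM : wedge U (M *ᵥ U) ≠ 0 := fun h =>
    hU (exists_eq_smul_of_wedge_eq_zero (by simpa using hU₀ 0) h)
  have hdiscr := hM.discr_pos hUM
  obtain ⟨μ₁, μ₂, hsum, hprod, hdiff⟩ := exists_add_eq_trace_mul_eq_det M hdiscr.le
  have hne : μ₁ - μ₂ ≠ 0 := fun h => by simp [h] at hdiff; linarith
  refine Injective.of_lt_imp_ne fun a b hab heq => ?_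
  obtain ⟨r, rfl⟩ := Nat.exists_eq_add_of_lt hab
  have hpow : μ₁ ^ (r + 1) ≠ μ₂ ^ (r + 1) := by
    rw [Ne, pow_eq_pow_iff_of_ne_zero r.succ_ne_zero]
    rintro (h | ⟨h, -⟩)
    · exact hne (sub_eq_zero.mpr h)
    · exact htr (by rw [← hsum, h]; ring)
  have hwedge : wedge U (M ^ (r + 1) *ᵥ U) = 0 := by
    have h := (wedge_eq_zero_iff_div_eq_div (hU₀ a) (hU₀ _)).mpr heq
    rwa [add_assoc, pow_add, ← mulVec_mulVec, wedge_mulVec_mulVec, det_pow,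
      mul_eq_zero, or_iff_right (pow_ne_zero _ hdet)] at h
  have key := mul_wedge_pow_mulVec hsum hprod U (r + 1)
  rw [hwedge, mul_zero, eq_comm, mul_eq_zero] at key
  exact key.elim (fun h => hpow (sub_eq_zero.mp h)) hUM

theorem stmt_12_general (F0 F2 F4 : ℝ) (hdet : F0 * F4 ≠ F2 ^ 2)
    (heig : ¬ ∃ c : ℝ, Matrix.mulVec !![F0, F2; F2, F4] ![F0, F2] = c • ![F0, F2])
    (P0 P2 : ℕ → ℝ) (h00 : P0 0 = F0) (h20 : P2 0 = F2)
    (h0 : ∀ d, P0 (d + 1) = F0 * P0 d + F2 * P2 d)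
    (h2 : ∀ d, P2 (d + 1) = F2 * P0 d + F4 * P2 d)
    (hP0 : ∀ d, P0 d ≠ 0) (hP2 : ∀ d, P2 d ≠ 0) :
    Function.Injective (fun d => P2 d / P0 d) := by
  set M : Matrix (Fin 2) (Fin 2) ℝ := !![F0, F2; F2, F4]
  have hP : ∀ d, ![P0 d, P2 d] = M ^ d *ᵥ ![F0, F2] := by
    intro d
    induction d with
    | zero => simp [h00, h20]
    | succ d ih => rw [pow_succ', ← mulVec_mulVec, ← ih, mulVec_fin_two]; simp [M, h0, h2]
  have htr : M.trace ≠ 0 := by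
    intro h
    apply hP2 1
    rw [trace_fin_two_of] at h
    rw [h2, h00, h20]
    linear_combination F2 * h
  have hfun : (fun d => P2 d / P0 d) =
      fun d => (M ^ d *ᵥ ![F0, F2]) 1 / (M ^ d *ᵥ ![F0, F2]) 0 := by
    simp [← hP]
  rw [hfun]
  refine injective_div_pow_mulVec_of_isSymm ?_ ?_ htr heig fun d => by simpa [← hP] using hP0 d
  · exact IsSymm.ext fun i j => by fin_cases i <;> fin_cases j <;> rfl
  · simpa [M, det_fin_two_of, sub_eq_zero, sq] using hdet

theorem stmt_12 (F0 F2 F4 : ℝ) (hF0 : 0 < F0) (hF2 : 0 < F2) (hdet : F0 * F4 ≠ F2 ^ 2)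
    (heig : ¬ ∃ c : ℝ, Matrix.mulVec !![F0, F2; F2, F4] ![F0, F2] = c • ![F0, F2])
    (P0 P2 : ℕ → ℝ) (h00 : P0 0 = F0) (h20 : P2 0 = F2)
    (h0 : ∀ d, P0 (d + 1) = F0 * P0 d + F2 * P2 d)
    (h2 : ∀ d, P2 (d + 1) = F2 * P0 d + F4 * P2 d)
    (hP0 : ∀ d, P0 d ≠ 0) (hP2 : ∀ d, P2 d ≠ 0) :
    Function.Injective (fun d => P2 d / P0 d) :=
  stmt_12_general F0 F2 F4 hdet heig P0 P2 h00 h20 h0 h2 hP0 hP2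
end

section
/- Let d ≥ 2 and consider the complete graph K_{d+2} with one edge {u,v} replaced by a dangling edge at u and a dangling edge at v. Suppose every vertex carries the relation EQ_{d+1} (in any solution, each vertex is incident either to all d+1 of its edges, or to none). Then the solutions are exactly: the empty set, and the set of all edges (including both dangling edges). In particular, a solution contains one dangling edge if and only if it contains the other. -/
open Finset

private lemma deg_card (d : ℕ) (w : Fin (d+2)) :
    ((Finset.univ.filter
      (fun e : Sym2 (Fin (d + 2)) => ¬ e.IsDiag ∧ e ≠ s((0 : Fin (d + 2)), 1))).filter
      (fun e => w ∈ e)).card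
    = (Finset.univ.filter
        (fun x : Fin (d+2) => x ≠ w ∧ s(w,x) ≠ s((0:Fin (d+2)),1))).card := by
  apply (Finset.card_bij (fun x _ => s(w,x)) ?_ ?_ ?_).symm
  · intro x hx
    simp only [Finset.mem_filter, Finset.mem_univ, true_and] at hx ⊢
    refine ⟨⟨?_, hx.2⟩, by simp⟩
    simp only [Sym2.mk_isDiag_iff]
    exact fun h => hx.1 h.symm
  · intro a ha b hb h
    simp only [Finset.mem_filter, Finset.mem_univ, true_and] at ha hb
    rw [Sym2.eq_iff] at h
    rcases h with ⟨_, h⟩ | ⟨h1, h2⟩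
    · exact h
    · exact absurd h2 ha.1
  · intro e he
    induction e using Sym2.ind with
    | _ a b =>
      simp only [Finset.mem_filter, Finset.mem_univ, true_and, Sym2.mem_iff,
        Sym2.mk_isDiag_iff] at he
      obtain ⟨⟨hab, hne⟩, hw⟩ := he
      rcases hw with rfl | rfl
      · refine ⟨b, ?_, rfl⟩
        simp only [Finset.mem_filter, Finset.mem_univ, true_and]
        exact ⟨fun h => hab h.symm, hne⟩
      · refine ⟨a, ?_, Sym2.eq_swap⟩
        simp only [Finset.mem_filter, Finset.mem_univ, true_and]
        exact ⟨hab, fun h => hne (Sym2.eq_swap.trans h)⟩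

private lemma h01' (d : ℕ) : (0 : Fin (d+2)) ≠ 1 := by
  simp [Fin.ext_iff]

private lemma degA0 (d : ℕ) :
    (Finset.univ.filter
      (fun x : Fin (d+2) => x ≠ 0 ∧ s((0:Fin (d+2)),x) ≠ s((0:Fin (d+2)),1))).card = d := by
  have h : (Finset.univ.filter
      (fun x : Fin (d+2) => x ≠ 0 ∧ s((0:Fin (d+2)),x) ≠ s((0:Fin (d+2)),1)))
      = ({0,1} : Finset (Fin (d+2)))ᶜ := by
    ext x
    simp [Sym2.eq_iff, h01' d]
  rw [h, Finset.card_compl, Finset.card_pair (h01' d), Fintype.card_fin]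
  omega

private lemma degA1 (d : ℕ) :
    (Finset.univ.filter
      (fun x : Fin (d+2) => x ≠ 1 ∧ s((1:Fin (d+2)),x) ≠ s((0:Fin (d+2)),1))).card = d := by
  have h : (Finset.univ.filter
      (fun x : Fin (d+2) => x ≠ 1 ∧ s((1:Fin (d+2)),x) ≠ s((0:Fin (d+2)),1)))
      = ({1,0} : Finset (Fin (d+2)))ᶜ := by
    ext x
    simp [Sym2.eq_iff, (h01' d).symm]
  rw [h, Finset.card_compl, Finset.card_pair (h01' d).symm, Fintype.card_fin]
  omega

private lemma degAw (d : ℕ) (w : Fin (d+2)) (hw0 : w ≠ 0) (hw1 : w ≠ 1) :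
    (Finset.univ.filter
      (fun x : Fin (d+2) => x ≠ w ∧ s(w,x) ≠ s((0:Fin (d+2)),1))).card = d + 1 := by
  have h : (Finset.univ.filter
      (fun x : Fin (d+2) => x ≠ w ∧ s(w,x) ≠ s((0:Fin (d+2)),1)))
      = ({w} : Finset (Fin (d+2)))ᶜ := by
    ext x
    simp [Sym2.eq_iff, hw0, hw1]
  rw [h, Finset.card_compl, Finset.card_singleton, Fintype.card_fin]
  omega

theorem stmt_15 (d : ℕ) (hd : 2 ≤ d)
    (E : Finset (Sym2 (Fin (d + 2))))
    (hE : E = Finset.univ.filter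
      (fun e : Sym2 (Fin (d + 2)) => ¬ e.IsDiag ∧ e ≠ s((0 : Fin (d + 2)), 1)))
    (S : Finset (Sym2 (Fin (d + 2)))) (hS : S ⊆ E) (du dv : Bool) :
    ((∀ w : Fin (d + 2),
        (S.filter (fun e => w ∈ e)).card
            + (if w = 0 ∧ du = true then 1 else 0)
            + (if w = 1 ∧ dv = true then 1 else 0) = 0 ∨
        (S.filter (fun e => w ∈ e)).card
            + (if w = 0 ∧ du = true then 1 else 0)
            + (if w = 1 ∧ dv = true then 1 else 0) = d + 1) ↔
      ((S = ∅ ∧ du = false ∧ dv = false) ∨ (S = E ∧ du = true ∧ dv = true))) ∧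
    ((∀ w : Fin (d + 2),
        (S.filter (fun e => w ∈ e)).card
            + (if w = 0 ∧ du = true then 1 else 0)
            + (if w = 1 ∧ dv = true then 1 else 0) = 0 ∨
        (S.filter (fun e => w ∈ e)).card
            + (if w = 0 ∧ du = true then 1 else 0)
            + (if w = 1 ∧ dv = true then 1 else 0) = d + 1) →
      (du = true ↔ dv = true)) := by
  have h01 : (0 : Fin (d+2)) ≠ 1 := h01' d
  have hdeg0 : (E.filter (fun e => (0:Fin (d+2)) ∈ e)).card = d := by
    rw [hE, deg_card, degA0]
  have hdeg1 : (E.filter (fun e => (1:Fin (d+2)) ∈ e)).card = d := by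
    rw [hE, deg_card, degA1]
  have hdegw : ∀ w : Fin (d+2), w ≠ 0 → w ≠ 1 →
      (E.filter (fun e => w ∈ e)).card = d + 1 := by
    intro w hw0 hw1; rw [hE, deg_card, degAw d w hw0 hw1]
  have hEmem : ∀ a b : Fin (d+2), a ≠ b → ¬(a = 0 ∧ b = 1) → ¬(a = 1 ∧ b = 0) →
      s(a,b) ∈ E := by
    intro a b hab h1 h2
    rw [hE]
    simp only [Finset.mem_filter, Finset.mem_univ, true_and, Sym2.mk_isDiag_iff,
      Ne, Sym2.eq_iff]
    tauto
  have hub : ∀ w : Fin (d+2),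
      (S.filter (fun e => w ∈ e)).card ≤ (E.filter (fun e => w ∈ e)).card :=
    fun w => Finset.card_le_card (Finset.filter_subset_filter _ hS)
  have hfull : ∀ w : Fin (d+2),
      (S.filter (fun e => w ∈ e)).card = (E.filter (fun e => w ∈ e)).card →
      ∀ e ∈ E, w ∈ e → e ∈ S := by
    intro w h e he hwe
    have heq := Finset.eq_of_subset_of_card_le (Finset.filter_subset_filter _ hS)
      (le_of_eq h.symm)
    have hm : e ∈ E.filter (fun e => w ∈ e) := Finset.mem_filter.mpr ⟨he, hwe⟩
    rw [← heq] at hm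
    exact (Finset.mem_filter.mp hm).1
  have hpos : ∀ (w : Fin (d+2)) (e : Sym2 (Fin (d+2))), e ∈ S → w ∈ e →
      1 ≤ (S.filter (fun e => w ∈ e)).card :=
    fun w e he hwe => Finset.card_pos.mpr ⟨e, Finset.mem_filter.mpr ⟨he, hwe⟩⟩
  set c : Fin (d+2) := ⟨2, by omega⟩ with hc
  have hc0 : c ≠ 0 := by simp [hc, Fin.ext_iff]
  have hc1 : c ≠ 1 := by simp [hc, Fin.ext_iff]
  have key : (∀ w : Fin (d + 2),
        (S.filter (fun e => w ∈ e)).card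
            + (if w = 0 ∧ du = true then 1 else 0)
            + (if w = 1 ∧ dv = true then 1 else 0) = 0 ∨
        (S.filter (fun e => w ∈ e)).card
            + (if w = 0 ∧ du = true then 1 else 0)
            + (if w = 1 ∧ dv = true then 1 else 0) = d + 1) →
      ((S = ∅ ∧ du = false ∧ dv = false) ∨ (S = E ∧ du = true ∧ dv = true)) := by
    intro H
    have H0 := H 0
    have H1 := H 1
    rw [if_neg (show ¬((0:Fin (d+2)) = 1 ∧ dv = true) from fun hh => h01 hh.1),
      add_zero, if_congr (and_iff_right (rfl : (0:Fin (d+2)) = 0)) rfl rfl] at H0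
    rw [if_neg (show ¬((1:Fin (d+2)) = 0 ∧ du = true) from fun hh => (Ne.symm h01) hh.1),
      add_zero, if_congr (and_iff_right (rfl : (1:Fin (d+2)) = 1)) rfl rfl] at H1
    have Hw : ∀ w : Fin (d+2), w ≠ 0 → w ≠ 1 →
        ((S.filter (fun e => w ∈ e)).card = 0 ∨
          (S.filter (fun e => w ∈ e)).card = d + 1) := by
      intro w hw0 hw1
      have := H w
      simpa [hw0, hw1] using this
    have hdu_t : du = true → (S.filter (fun e => (0:Fin (d+2)) ∈ e)).card = d := by
      intro h
      rw [h, if_pos (rfl : (true:Bool) = true)] at H0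
      have := hub 0
      rw [hdeg0] at this
      omega
    have hdu_f : du = false → (S.filter (fun e => (0:Fin (d+2)) ∈ e)).card = 0 := by
      intro h
      rw [h, if_neg Bool.false_ne_true, add_zero] at H0
      have := hub 0
      rw [hdeg0] at this
      omega
    have hdv_t : dv = true → (S.filter (fun e => (1:Fin (d+2)) ∈ e)).card = d := by
      intro h
      rw [h, if_pos (rfl : (true:Bool) = true)] at H1
      have := hub 1
      rw [hdeg1] at this
      omega
    have hdv_f : dv = false → (S.filter (fun e => (1:Fin (d+2)) ∈ e)).card = 0 := by
      intro h
      rw [h, if_neg Bool.false_ne_true, add_zero] at H1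
      have := hub 1
      rw [hdeg1] at this
      omega
    cases du with
    | true =>
      have hF0 := hdu_t rfl
      have hfull0 := hfull 0 (by rw [hF0, hdeg0])
      have h0c : s((0:Fin (d+2)), c) ∈ S :=
        hfull0 _ (hEmem 0 c (Ne.symm hc0) (fun h => hc1 h.2) (fun h => h01 h.1))
          (by simp)
      have hFcpos : 1 ≤ (S.filter (fun e => c ∈ e)).card :=
        hpos c _ h0c (by simp)
      have hFc : (S.filter (fun e => c ∈ e)).card = d + 1 := by
        rcases Hw c hc0 hc1 with h | h
        · omega
        · exact h
      have hfullc := hfull c (by rw [hFc, hdegw c hc0 hc1])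
      have hc1S : s(c, (1:Fin (d+2))) ∈ S :=
        hfullc _ (hEmem c 1 hc1 (fun h => hc0 h.1) (fun h => hc1 h.1)) (by simp)
      have hF1pos : 1 ≤ (S.filter (fun e => (1:Fin (d+2)) ∈ e)).card :=
        hpos 1 _ hc1S (by simp)
      cases dv with
      | false =>
        have := hdv_f rfl
        omega
      | true =>
        have hF1 := hdv_t rfl
        have hfull1 := hfull 1 (by rw [hF1, hdeg1])
        have hall : ∀ e ∈ E, e ∈ S := by
          intro e he
          revert he
          induction e using Sym2.ind with
          | _ a b =>
            intro he
            by_cases ha0 : a = 0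
            · subst ha0; exact hfull0 _ he (by simp)
            · by_cases ha1 : a = 1
              · subst ha1; exact hfull1 _ he (by simp)
              · have h0a : s((0:Fin (d+2)), a) ∈ S :=
                  hfull0 _ (hEmem 0 a (Ne.symm ha0) (fun h => ha1 h.2)
                    (fun h => h01 h.1)) (by simp)
                have hFapos : 1 ≤ (S.filter (fun e => a ∈ e)).card :=
                  hpos a _ h0a (by simp)
                have hFa : (S.filter (fun e => a ∈ e)).card = d + 1 := by
                  rcases Hw a ha0 ha1 with h | h
                  · omega
                  · exact h
                exact hfull a (by rw [hFa, hdegw a ha0 ha1]) _ he (by simp)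
        exact Or.inr ⟨Finset.Subset.antisymm hS hall, rfl, rfl⟩
    | false =>
      have hF0 := hdu_f rfl
      have hnofull : ∀ x : Fin (d+2), x ≠ 0 → x ≠ 1 →
          (S.filter (fun e => x ∈ e)).card = 0 := by
        intro x hx0 hx1
        rcases Hw x hx0 hx1 with h | h
        · exact h
        · exfalso
          have hx0S : s(x, (0:Fin (d+2))) ∈ S :=
            hfull x (by rw [h, hdegw x hx0 hx1]) _
              (hEmem x 0 hx0 (fun hh => hx0 hh.1) (fun hh => hx1 hh.1)) (by simp)
          have := hpos 0 _ hx0S (by simp)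
          omega
      have hFc := hnofull c hc0 hc1
      cases dv with
      | true =>
        exfalso
        have hF1 := hdv_t rfl
        have hfull1 := hfull 1 (by rw [hF1, hdeg1])
        have h1c : s((1:Fin (d+2)), c) ∈ S :=
          hfull1 _ (hEmem 1 c (Ne.symm hc1) (fun h => h01 h.1.symm)
            (fun h => hc0 h.2)) (by simp)
        have := hpos c _ h1c (by simp)
        omega
      | false =>
        have hF1 := hdv_f rfl
        have hSe : S = ∅ := by
          rw [Finset.eq_empty_iff_forall_notMem]
          intro e he
          have heE := hS he
          revert he
          rw [hE] at heE
          simp only [Finset.mem_filter, Finset.mem_univ, true_and,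
            Sym2.mk_isDiag_iff] at heE
          revert heE
          induction e using Sym2.ind with
          | _ a b =>
            intro heE he
            have hpa : 1 ≤ (S.filter (fun e => a ∈ e)).card := hpos a _ he (by simp)
            by_cases ha0 : a = 0
            · subst ha0; omega
            · by_cases ha1 : a = 1
              · subst ha1; omega
              · have := hnofull a ha0 ha1
                omega
        exact Or.inl ⟨hSe, rfl, rfl⟩
  refine ⟨⟨key, ?_⟩, fun H => ?_⟩
  · rintro (⟨rfl, rfl, rfl⟩ | ⟨rfl, rfl, rfl⟩)
    · intro w
      left
      simp
    · intro w
      right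
      by_cases hw0 : w = 0
      · subst hw0
        rw [hdeg0]
        simp [h01]
      · by_cases hw1 : w = 1
        · subst hw1
          rw [hdeg1]
          simp [Ne.symm h01]
        · rw [hdegw w hw0 hw1]
          simp [hw0, hw1]
  · rcases key H with ⟨_, rfl, rfl⟩ | ⟨_, rfl, rfl⟩ <;> simp
end

section
/- Suppose relations HW=1 of arities 1, 2, and 3 can each be realized by a B-homogeneous simple graph with at most N vertices of maximum degree at most D (where a graph with k dangling edges realizes HW=1 of arity k if its solutions are exactly those selecting precisely one dangling edge). Then for every k ≥ 1, the relation HW=1 of arity k can be realized by a B-homogeneous simple graph with O(k·N) vertices of maximum degree at most D, via the following inductive construction: to go from arity k to arity k+1, take a node u realizing HW=1 of arity k, connect one of its dangling edges to a new node v realizing HW=1 of arity 2, and connect v's other dangling edge to a node w realizing HW=1 of arity 3; the k−1 remaining dangling edges of u together with the 2 remaining dangling edges of w form the k+1 dangling edges. Correctness: a subset D' of the k+1 dangling edges extends to a solution of the composed graph if and only if |D'| = 1. -/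
/-- `RealizesHW1 B k N D` means: there is a `B`-homogeneous simple graph (given by its
finset of non-loop edges on at most `N` vertices, with maximum degree at most `D`
counting dangling edges) with `k` dangling edges attached at the portal vertices `port i`,
whose solutions select exactly one dangling edge, i.e. it realizes the relation HW=1
of arity `k`. -/
def RealizesHW1 (B : Finset ℕ) (k N D : ℕ) : Prop :=
  ∃ n ≤ N, ∃ (E : Finset (Sym2 (Fin n))) (port : Fin k → Fin n),
    (∀ e ∈ E, ¬ e.IsDiag) ∧
    (∀ v : Fin n,
      (E.filter (fun e => v ∈ e)).card
        + (Finset.univ.filter (fun i => port i = v)).card ≤ D) ∧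
    (∀ D' : Finset (Fin k),
      (∃ S ⊆ E, ∀ v : Fin n,
          (S.filter (fun e => v ∈ e)).card
            + (D'.filter (fun i => port i = v)).card ∈ B) ↔ D'.card = 1)

/-!
Arity `k + 1` is obtained from arity `k` by chaining a gadget `u` of arity `k` with gadgets `v`
and `w` of arities 2 and 3, each link turning two dangling edges into one edge (a bridge). A
bridge replaces a dangling edge at both of its ends, so vertex degrees do not change, and each
step adds at most `2N` vertices, so arity `k` needs at most `(2k - 1)N` of them.
-/

open Finset

/-- A graph on `V` with dangling edges indexed by `P`, dangling edge `i` hanging at `port i`. -/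
structure Gadget (V P : Type*) where
  edges : Finset (Sym2 V)
  port : P → V

lemma exists_finset_unit_card_eq {n : ℕ} (hn : n ≤ 1) : ∃ J : Finset Unit, #J = n := by
  obtain ⟨J, -, hJ⟩ := exists_subset_card_eq (s := (univ : Finset Unit)) (by simpa using hn)
  exact ⟨J, hJ⟩

namespace Gadget

variable {V W P Q : Type*}

def IsLoopless (G : Gadget V P) : Prop := ∀ e ∈ G.edges, ¬ e.IsDiag

def congr (G : Gadget V P) (e : V ≃ W) (f : P ≃ Q) : Gadget W Q :=
  ⟨G.edges.map e.toEmbedding.sym2Map, e ∘ G.port ∘ f.symm⟩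

lemma IsLoopless.congr {G : Gadget V P} (hG : G.IsLoopless) (e : V ≃ W) (f : P ≃ Q) :
    (G.congr e f).IsLoopless := by
  simp only [IsLoopless, Gadget.congr, mem_map, forall_exists_index, and_imp]
  rintro _ x hx rfl
  simpa [Sym2.isDiag_map e.injective] using hG x hx

variable [DecidableEq V] [DecidableEq W]

def load (G : Gadget V P) (S : Finset (Sym2 V)) (D : Finset P) (v : V) : ℕ :=
  #{e ∈ S | v ∈ e} + #{i ∈ D | G.port i = v}

def Accepts (B : Finset ℕ) (G : Gadget V P) (D : Finset P) : Prop :=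
  ∃ S ⊆ G.edges, ∀ v, G.load S D v ∈ B

def DegreeLE [Fintype P] (G : Gadget V P) (maxDeg : ℕ) : Prop :=
  ∀ v, G.load G.edges univ v ≤ maxDeg

def IsHW1 [Fintype P] (B : Finset ℕ) (maxDeg : ℕ) (G : Gadget V P) : Prop :=
  G.IsLoopless ∧ G.DegreeLE maxDeg ∧ ∀ D, G.Accepts B D ↔ #D = 1

lemma load_congr (G : Gadget V P) (e : V ≃ W) (f : P ≃ Q) (S : Finset (Sym2 V))
    (D : Finset P) (v : V) :
    (G.congr e f).load (S.map e.toEmbedding.sym2Map) (D.map f.toEmbedding) (e v) =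
      G.load S D v := by
  simp [load, Gadget.congr, filter_map, Sym2.mem_map, e.injective.eq_iff]

lemma accepts_congr (B : Finset ℕ) (G : Gadget V P) (e : V ≃ W) (f : P ≃ Q) (D : Finset P) :
    (G.congr e f).Accepts B (D.map f.toEmbedding) ↔ G.Accepts B D := by
  constructor
  · rintro ⟨S, hS, hload⟩
    obtain ⟨S, hS, rfl⟩ := subset_map_iff.mp hS
    exact ⟨S, map_subset_map.mp hS, fun v => load_congr G e f S D v ▸ hload (e v)⟩
  · rintro ⟨S, hS, hload⟩
    refine ⟨_, map_subset_map.mpr hS, fun w => ?_⟩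
    rw [← e.apply_symm_apply w, load_congr]
    exact hload _

lemma IsHW1.congr [Fintype P] [Fintype Q] {B : Finset ℕ} {maxDeg : ℕ} {G : Gadget V P}
    (hG : G.IsHW1 B maxDeg) (e : V ≃ W) (f : P ≃ Q) : (G.congr e f).IsHW1 B maxDeg := by
  obtain ⟨hloop, hdeg, hacc⟩ := hG
  refine ⟨hloop.congr e f, fun w => ?_, fun D => ?_⟩
  · rw [← e.apply_symm_apply w, ← map_univ_equiv f]
    exact (load_congr G e f _ _ _).trans_le (hdeg _)
  · obtain ⟨D, rfl⟩ : ∃ D', D = D'.map f.toEmbedding :=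
      ⟨D.map f.symm.toEmbedding, by simp [map_map]⟩
    rw [accepts_congr, hacc, card_map]

section Join

variable {V₁ V₂ P₁ P₂ : Type*}

def bridge (G₁ : Gadget V₁ (P₁ ⊕ Unit)) (G₂ : Gadget V₂ (Unit ⊕ P₂)) (u : Unit) :
    Sym2 (V₁ ⊕ V₂) :=
  s(.inl (G₁.port (.inr u)), .inr (G₂.port (.inl u)))

def joinEdge (G₁ : Gadget V₁ (P₁ ⊕ Unit)) (G₂ : Gadget V₂ (Unit ⊕ P₂)) :
    Sym2 V₁ ⊕ (Sym2 V₂ ⊕ Unit) ↪ Sym2 (V₁ ⊕ V₂) where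
  toFun := Sum.elim (Sym2.map .inl) (Sum.elim (Sym2.map .inr) (bridge G₁ G₂))
  inj' := by
    refine (Sym2.map.injective Sum.inl_injective).sumElim
      ((Sym2.map.injective Sum.inr_injective).sumElim (Function.injective_of_subsingleton _) ?_) ?_
    · intro e _ h
      induction e using Sym2.ind
      simp [bridge] at h
    · rintro e (e' | _) h <;> induction e using Sym2.ind
      · induction e' using Sym2.ind
        simp at h
      · simp [bridge] at h

/-- The last dangling edge of `G₁` and the first dangling edge of `G₂` become one edge, the
bridge. -/
def join (G₁ : Gadget V₁ (P₁ ⊕ Unit)) (G₂ : Gadget V₂ (Unit ⊕ P₂)) :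
    Gadget (V₁ ⊕ V₂) (P₁ ⊕ P₂) :=
  ⟨(G₁.edges.disjSum (G₂.edges.disjSum univ)).map (joinEdge G₁ G₂),
    Sum.map (G₁.port ∘ .inl) (G₂.port ∘ .inr)⟩

lemma IsLoopless.join {G₁ : Gadget V₁ (P₁ ⊕ Unit)} {G₂ : Gadget V₂ (Unit ⊕ P₂)}
    (h₁ : G₁.IsLoopless) (h₂ : G₂.IsLoopless) : (G₁.join G₂).IsLoopless := by
  simp only [IsLoopless, Gadget.join, mem_map, forall_exists_index, and_imp]
  rintro _ (e₁ | e₂ | u) he rfl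
  · simpa [joinEdge, Sym2.isDiag_map Sum.inl_injective] using h₁ e₁ (by simpa using he)
  · simpa [joinEdge, Sym2.isDiag_map Sum.inr_injective] using h₂ e₂ (by simpa using he)
  · simp [joinEdge, bridge]

variable [DecidableEq V₁] [DecidableEq V₂]
  (G₁ : Gadget V₁ (P₁ ⊕ Unit)) (G₂ : Gadget V₂ (Unit ⊕ P₂))

/-- Selecting the bridge (`J = univ`) acts on each side as selecting the dangling edge it
replaces. -/
lemma load_join_inl (S₁ : Finset (Sym2 V₁)) (S₂ : Finset (Sym2 V₂)) (J : Finset Unit)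
    (D : Finset (P₁ ⊕ P₂)) (a : V₁) :
    (G₁.join G₂).load ((S₁.disjSum (S₂.disjSum J)).map (joinEdge G₁ G₂)) D (.inl a) =
      G₁.load S₁ (D.toLeft.disjSum J) a := by
  rw [← D.toLeft_disjSum_toRight]
  simp only [load, card_filter, sum_map, sum_disjSum]
  simp [joinEdge, join, bridge, Sym2.mem_map, eq_comm]
  ring

lemma load_join_inr (S₁ : Finset (Sym2 V₁)) (S₂ : Finset (Sym2 V₂)) (J : Finset Unit)
    (D : Finset (P₁ ⊕ P₂)) (b : V₂) :
    (G₁.join G₂).load ((S₁.disjSum (S₂.disjSum J)).map (joinEdge G₁ G₂)) D (.inr b) =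
      G₂.load S₂ (J.disjSum D.toRight) b := by
  rw [← D.toLeft_disjSum_toRight]
  simp only [load, card_filter, sum_map, sum_disjSum]
  simp [joinEdge, join, bridge, Sym2.mem_map, eq_comm]
  ring

lemma accepts_join (B : Finset ℕ) (D : Finset (P₁ ⊕ P₂)) :
    (G₁.join G₂).Accepts B D ↔
      ∃ J : Finset Unit,
        G₁.Accepts B (D.toLeft.disjSum J) ∧ G₂.Accepts B (J.disjSum D.toRight) := by
  constructor
  · rintro ⟨S, hS, hload⟩
    obtain ⟨S, hS', rfl⟩ := subset_map_iff.mp hS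
    rw [subset_disjSum, subset_disjSum] at hS'
    rw [← S.toLeft_disjSum_toRight, ← S.toRight.toLeft_disjSum_toRight] at hload
    exact ⟨S.toRight.toRight,
      ⟨S.toLeft, hS'.1, fun a => load_join_inl G₁ G₂ .. ▸ hload (.inl a)⟩,
      ⟨S.toRight.toLeft, hS'.2.1, fun b => load_join_inr G₁ G₂ .. ▸ hload (.inr b)⟩⟩
  · rintro ⟨J, ⟨S₁, hS₁, h₁⟩, ⟨S₂, hS₂, h₂⟩⟩
    refine ⟨_, map_subset_map.mpr (disjSum_mono hS₁ (disjSum_mono hS₂ (subset_univ J))), ?_⟩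
    rintro (a | b)
    · exact load_join_inl G₁ G₂ .. ▸ h₁ a
    · exact load_join_inr G₁ G₂ .. ▸ h₂ b

lemma DegreeLE.join [Fintype P₁] [Fintype P₂] {G₁ : Gadget V₁ (P₁ ⊕ Unit)}
    {G₂ : Gadget V₂ (Unit ⊕ P₂)} {maxDeg : ℕ} (h₁ : G₁.DegreeLE maxDeg)
    (h₂ : G₂.DegreeLE maxDeg) : (G₁.join G₂).DegreeLE maxDeg := by
  rintro (a | b)
  · exact (load_join_inl G₁ G₂ _ _ _ univ a).trans_le
      (by rw [toLeft_univ, univ_disjSum_univ]; exact h₁ a)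
  · exact (load_join_inr G₁ G₂ _ _ _ univ b).trans_le
      (by rw [toRight_univ, univ_disjSum_univ]; exact h₂ b)

end Join

/-- A dangling edge of `G₁` excludes the first bridge, so `G₂` selects the second one and `G₃`
has no dangling edge; symmetrically from the side of `G₃`. -/
theorem IsHW1.join_join {V₁ V₂ V₃ P₁ P₃ : Type*} [DecidableEq V₁] [DecidableEq V₂]
    [DecidableEq V₃] [Fintype P₁] [Fintype P₃] {B : Finset ℕ} {maxDeg : ℕ}
    {G₁ : Gadget V₁ (P₁ ⊕ Unit)} {G₂ : Gadget V₂ (Unit ⊕ Unit)}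
    {G₃ : Gadget V₃ (Unit ⊕ P₃)}
    (h₁ : G₁.IsHW1 B maxDeg) (h₂ : G₂.IsHW1 B maxDeg) (h₃ : G₃.IsHW1 B maxDeg) :
    ((G₁.join G₂).join G₃).IsHW1 B maxDeg := by
  obtain ⟨l₁, d₁, a₁⟩ := h₁
  obtain ⟨l₂, d₂, a₂⟩ := h₂
  obtain ⟨l₃, d₃, a₃⟩ := h₃
  refine ⟨(l₁.join l₂).join l₃, (d₁.join d₂).join d₃, fun D => ?_⟩
  simp only [accepts_join, toLeft_disjSum, toRight_disjSum, a₁, a₂, a₃, card_disjSum]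
  rw [← card_toLeft_add_card_toRight]
  constructor
  · rintro ⟨J', ⟨J, hJ₁, hJ₂⟩, hJ₃⟩
    have := card_le_one_of_subsingleton J
    omega
  · intro h
    obtain ⟨J, hJ⟩ := exists_finset_unit_card_eq (n := 1 - #D.toLeft) (by omega)
    obtain ⟨J', hJ'⟩ := exists_finset_unit_card_eq (n := #D.toLeft) (by omega)
    exact ⟨J', ⟨J, by omega, by omega⟩, by omega⟩

end Gadget

lemma RealizesHW1.exists_isHW1 {B : Finset ℕ} {k N maxDeg : ℕ} (h : RealizesHW1 B k N maxDeg)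
    (P : Type*) [Fintype P] (hP : Fintype.card P = k) :
    ∃ n ≤ N, ∃ G : Gadget (Fin n) P, G.IsHW1 B maxDeg := by
  obtain ⟨n, hn, E, port, hG⟩ := h
  exact ⟨n, hn, _, (show (Gadget.mk E port).IsHW1 B maxDeg from hG).congr (Equiv.refl _)
    (Fintype.equivFinOfCardEq hP).symm⟩

lemma Gadget.IsHW1.realizesHW1 {V P : Type*} [DecidableEq V] [Fintype V] [Fintype P]
    {B : Finset ℕ} {maxDeg k N : ℕ} {G : Gadget V P} (hG : G.IsHW1 B maxDeg)
    (hP : Fintype.card P = k) (hV : Fintype.card V ≤ N) : RealizesHW1 B k N maxDeg := by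
  subst hP
  exact ⟨_, hV, _, _, hG.congr (Fintype.equivFin V) (Fintype.equivFin P)⟩

lemma RealizesHW1.mono {B : Finset ℕ} {k N N' maxDeg : ℕ} (h : RealizesHW1 B k N maxDeg)
    (hN : N ≤ N') : RealizesHW1 B k N' maxDeg :=
  let ⟨n, hn, hG⟩ := h
  ⟨n, hn.trans hN, hG⟩

lemma RealizesHW1.succ {B : Finset ℕ} {k N₁ N₂ N₃ maxDeg : ℕ}
    (hu : RealizesHW1 B (k + 1) N₁ maxDeg) (hv : RealizesHW1 B 2 N₂ maxDeg)
    (hw : RealizesHW1 B 3 N₃ maxDeg) : RealizesHW1 B (k + 2) (N₁ + N₂ + N₃) maxDeg := by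
  obtain ⟨n₁, hn₁, G₁, h₁⟩ := hu.exists_isHW1 (Fin k ⊕ Unit) (by simp)
  obtain ⟨n₂, hn₂, G₂, h₂⟩ := hv.exists_isHW1 (Unit ⊕ Unit) rfl
  obtain ⟨n₃, hn₃, G₃, h₃⟩ := hw.exists_isHW1 (Unit ⊕ Fin 2) (by simp)
  exact (h₁.join_join h₂ h₃).realizesHW1 (by simp) (by simp; omega)

lemma realizesHW1_of_one_two_three {B : Finset ℕ} {N maxDeg : ℕ}
    (h₁ : RealizesHW1 B 1 N maxDeg) (h₂ : RealizesHW1 B 2 N maxDeg)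
    (h₃ : RealizesHW1 B 3 N maxDeg) (m : ℕ) :
    RealizesHW1 B (m + 1) ((2 * m + 1) * N) maxDeg := by
  induction m with
  | zero => simpa using h₁
  | succ m ih => exact (ih.succ h₂ h₃).mono (le_of_eq (by ring))

theorem stmt_16 (B : Finset ℕ) (N D : ℕ)
    (h1 : RealizesHW1 B 1 N D) (h2 : RealizesHW1 B 2 N D) (h3 : RealizesHW1 B 3 N D) :
    ∃ C : ℕ, ∀ k : ℕ, 1 ≤ k → RealizesHW1 B k (C * k * N) D := by
  refine ⟨2, fun k hk => ?_⟩
  obtain ⟨m, rfl⟩ : ∃ m, k = m + 1 := ⟨k - 1, by omega⟩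
  exact (realizesHW1_of_one_two_three h1 h2 h3 m).mono (Nat.mul_le_mul_right N (by omega))
end

section
/- Let n ≥ 1 and m ≥ 1, and let φ be a CNF formula with variables x₁,...,xₙ and clauses C₁,...,Cₘ. Consider the grid-like constraint system with Boolean row-variables r₁,...,rₙ (one per variable) and column-state variables s_{i,j} ∈ {0,1} for 0 ≤ i ≤ n, 1 ≤ j ≤ m, subject to: s_{0,j} = 0 and s_{n,j} = 1 for all j; and for each i ∈ [n], j ∈ [m]: s_{i,j} = 1 iff (s_{i−1,j} = 1, or (x_i appears positively in C_j and r_i = 1), or (x_i appears negatively in C_j and r_i = 0)). Then the assignments (r₁,...,rₙ) for which the system has a (necessarily unique) solution in the s-variables are exactly the satisfying assignments of φ, and the number of solutions of the full system equals the number of satisfying assignments of φ. -/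
/-- `r` is a satisfying assignment of the CNF formula whose `j`-th clause contains the
variables `pos j` positively and `neg j` negatively. -/
def SatAssign (n m : ℕ) (pos neg : Fin m → Finset (Fin n)) (r : Fin n → Bool) : Prop :=
  ∀ j : Fin m, ∃ i : Fin n, (i ∈ pos j ∧ r i = true) ∨ (i ∈ neg j ∧ r i = false)

/-- The grid-like constraint system: column states start unsatisfied, end satisfied,
and propagate satisfaction of each clause row by row. -/
def GridSys (n m : ℕ) (pos neg : Fin m → Finset (Fin n)) (r : Fin n → Bool)
    (s : Fin (n + 1) → Fin m → Bool) : Prop :=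
  (∀ j : Fin m, s 0 j = false) ∧ (∀ j : Fin m, s (Fin.last n) j = true) ∧
  ∀ (i : Fin n) (j : Fin m),
    (s i.succ j = true ↔
      (s i.castSucc j = true ∨ (i ∈ pos j ∧ r i = true) ∨ (i ∈ neg j ∧ r i = false)))

/-- explicit solution -/
def sDef (n m : ℕ) (pos neg : Fin m → Finset (Fin n)) (r : Fin n → Bool) :
    Fin (n + 1) → Fin m → Bool := fun i j =>
  decide (∃ k : Fin n, (k : ℕ) < (i : ℕ) ∧
    ((k ∈ pos j ∧ r k = true) ∨ (k ∈ neg j ∧ r k = false)))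

lemma uniq (n m : ℕ) (pos neg : Fin m → Finset (Fin n)) (r : Fin n → Bool)
    (s s' : Fin (n + 1) → Fin m → Bool)
    (hs : GridSys n m pos neg r s) (hs' : GridSys n m pos neg r s') : s = s' := by
  funext i j
  obtain ⟨i, hi⟩ := i
  induction i with
  | zero => rw [show (⟨0, hi⟩ : Fin (n+1)) = 0 from rfl, hs.1 j, hs'.1 j]
  | succ k ih =>
    have hk : k < n := by omega
    have h1 := hs.2.2 ⟨k, hk⟩ j
    have h2 := hs'.2.2 ⟨k, hk⟩ j
    have e : (⟨k+1, hi⟩ : Fin (n+1)) = (⟨k, hk⟩ : Fin n).succ := rfl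
    have e2 : (⟨k, hk⟩ : Fin n).castSucc = (⟨k, by omega⟩ : Fin (n+1)) := rfl
    rw [e, Bool.eq_iff_iff, h1, h2, e2, ih (by omega)]

lemma fwd (n m : ℕ) (pos neg : Fin m → Finset (Fin n)) (r : Fin n → Bool)
    (s : Fin (n + 1) → Fin m → Bool) (hs : GridSys n m pos neg r s) :
    SatAssign n m pos neg r := by
  intro j
  have key : ∀ i : ℕ, ∀ hi : i < n + 1, s ⟨i, hi⟩ j = true →
      ∃ k : Fin n, (k ∈ pos j ∧ r k = true) ∨ (k ∈ neg j ∧ r k = false) := by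
    intro i
    induction i with
    | zero => intro hi h; rw [show (⟨0, hi⟩ : Fin (n+1)) = 0 from rfl, hs.1 j] at h; simp at h
    | succ k ih =>
      intro hi h
      have hk : k < n := by omega
      have e : (⟨k+1, hi⟩ : Fin (n+1)) = (⟨k, hk⟩ : Fin n).succ := rfl
      rw [e, hs.2.2 ⟨k, hk⟩ j] at h
      rcases h with h | h
      · exact ih (by omega) h
      · exact ⟨⟨k, hk⟩, h⟩
  have := hs.2.1 j
  exact key n (by omega) (by rwa [show (⟨n, by omega⟩ : Fin (n+1)) = Fin.last n from rfl])

lemma bwd (n m : ℕ) (pos neg : Fin m → Finset (Fin n)) (r : Fin n → Bool)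
    (hr : SatAssign n m pos neg r) : GridSys n m pos neg r (sDef n m pos neg r) := by
  refine ⟨fun j => by simp [sDef], fun j => ?_, fun i j => ?_⟩
  · obtain ⟨i, hi⟩ := hr j
    simp only [sDef, decide_eq_true_eq]
    exact ⟨i, by simpa [Fin.last] using i.isLt, hi⟩
  · simp only [sDef, decide_eq_true_eq]
    constructor
    · rintro ⟨k, hk, hT⟩
      simp only [Fin.val_succ] at hk
      rcases Nat.lt_succ_iff_lt_or_eq.mp hk with h | h
      · exact Or.inl ⟨k, by simpa [Fin.castSucc] using h, hT⟩
      · exact Or.inr (by rwa [show k = i from Fin.ext h] at hT)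
    · rintro (⟨k, hk, hT⟩ | hT)
      · exact ⟨k, by simp only [Fin.val_succ]; exact Nat.lt_succ_of_lt (by simpa using hk), hT⟩
      · exact ⟨i, by simp, hT⟩

theorem stmt_17 (n m : ℕ) (hn : 1 ≤ n) (hm : 1 ≤ m) (pos neg : Fin m → Finset (Fin n)) :
    (∀ r : Fin n → Bool,
      (∃ s : Fin (n + 1) → Fin m → Bool, GridSys n m pos neg r s) ↔ SatAssign n m pos neg r) ∧
    (∀ (r : Fin n → Bool) (s s' : Fin (n + 1) → Fin m → Bool),
      GridSys n m pos neg r s → GridSys n m pos neg r s' → s = s') ∧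
    Nat.card {p : (Fin n → Bool) × (Fin (n + 1) → Fin m → Bool) // GridSys n m pos neg p.1 p.2} =
      Nat.card {r : Fin n → Bool // SatAssign n m pos neg r} := by
  refine ⟨fun r => ⟨fun ⟨s, hs⟩ => fwd n m pos neg r s hs,
      fun hr => ⟨sDef n m pos neg r, bwd n m pos neg r hr⟩⟩,
    fun r s s' => uniq n m pos neg r s s', ?_⟩
  apply Nat.card_eq_of_bijective (fun p => ⟨p.1.1, fwd n m pos neg p.1.1 p.1.2 p.2⟩)
  constructor
  · rintro ⟨⟨r, s⟩, hp⟩ ⟨⟨r', s'⟩, hp'⟩ h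
    simp only [Subtype.mk_eq_mk] at h
    subst h
    exact Subtype.ext (Prod.ext rfl (uniq n m pos neg r s s' hp hp'))
  · rintro ⟨r, hr⟩
    exact ⟨⟨(r, sDef n m pos neg r), bwd n m pos neg r hr⟩, rfl⟩
end
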